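/- arXiv:2408.08398 — 4 statements merged into one kernel-verified Lean document; each statement's English description precedes it below -/
import Mathlib

section
/- For the system ẋ₁ = x₂ - x₁Λ(x₁), ẋ₂ = -x₁ + u, at any point x with x₂ = 0 and x₁ ≥ 2.02, for every u ∈ ℝ the decrease condition ∇V(x)ᵀ(f(x) + g(x)u) ≤ -W(x) fails for any positive-definite W, i.e. ∇V(x)ᵀ(f(x)+g(x)u) = 0 for all u while W(x) > 0. -/
noncomputable def Lam : ℝ → ℝ := fun s =>
  if s < 2.02 then Real.exp (-1 / (2.02 - s)) else 0

theorem stmt_3 (W : ℝ × ℝ → ℝ)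
    (hW0 : W (0, 0) = 0) (hWpos : ∀ x : ℝ × ℝ, x ≠ (0, 0) → 0 < W x)
    (x₁ x₂ : ℝ) (hx₂ : x₂ = 0) (hx₁ : 2.02 ≤ x₁) :
    (∀ u : ℝ, x₁ * (x₂ - x₁ * Lam x₁) + x₂ * (-x₁ + u) = 0) ∧
    0 < W (x₁, x₂) ∧
    (∀ u : ℝ, ¬ (x₁ * (x₂ - x₁ * Lam x₁) + x₂ * (-x₁ + u) ≤ -W (x₁, x₂))) := by
  have hL : Lam x₁ = 0 := by
    simp [Lam, not_lt.mpr hx₁]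
  have hx1ne : x₁ ≠ 0 := by nlinarith
  have hWp : 0 < W (x₁, x₂) := hWpos _ (by simp [hx1ne])
  refine ⟨fun u => by rw [hx₂, hL]; ring, hWp, fun u h => ?_⟩
  subst hx₂; rw [hL] at h
  nlinarith
end

section
/- Let δ > 0 and define h₁(x) = δ − (−x₁ sin x₃ + x₂ cos x₃)², h₂(x) = x₁² + x₂² − 1.5²δ, and 𝒞 = {x ∈ ℝ³ : min(h₁(x), h₂(x)) ≥ 0}. Then 𝒞 is disjoint from the set {x ∈ ℝ³ : x₃ = 0 and x₁ cos x₃ + x₂ sin x₃ = 0}; i.e., if x ∈ 𝒞 then x₃ ≠ 0 or x₁ cos x₃ + x₂ sin x₃ ≠ 0. -/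
theorem stmt_7 (δ : ℝ) (hδ : 0 < δ) (x₁ x₂ x₃ : ℝ)
    (hmem : min (δ - ((-x₁) * Real.sin x₃ + x₂ * Real.cos x₃) ^ 2)
              (x₁ ^ 2 + x₂ ^ 2 - 1.5 ^ 2 * δ) ≥ 0) :
    x₃ ≠ 0 ∨ x₁ * Real.cos x₃ + x₂ * Real.sin x₃ ≠ 0 := by
  by_contra h
  push_neg at h
  obtain ⟨h3, hc⟩ := h
  subst h3
  simp [Real.cos_zero, Real.sin_zero] at hc
  subst hc
  have h1 := le_min_iff.mp hmem
  simp [Real.cos_zero, Real.sin_zero] at h1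
  nlinarith [h1.1, h1.2]
end

section
/- For the unicycle system ẋ₁ = v cos x₃, ẋ₂ = v sin x₃, ẋ₃ = ω with V(x) = x₁² + x₂² + b x₃² (b > 0) and positive-definite W, at any point x with x₃ = 0 and x₁ cos x₃ + x₂ sin x₃ = 0 and (x₁, x₂) ≠ (0,0), there exist no inputs v, ω ∈ ℝ satisfying the decrease condition 2x₁ v cos x₃ + 2x₂ v sin x₃ + 2b x₃ ω + W(x) ≤ 0. -/
theorem stmt_10 (b : ℝ) (hb : 0 < b) (W : ℝ × ℝ × ℝ → ℝ)
    (hW0 : W (0, 0, 0) = 0) (hWpos : ∀ x : ℝ × ℝ × ℝ, x ≠ (0, 0, 0) → 0 < W x)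
    (x₁ x₂ x₃ : ℝ) (hx₃ : x₃ = 0)
    (horth : x₁ * Real.cos x₃ + x₂ * Real.sin x₃ = 0)
    (hxy : (x₁, x₂) ≠ (0, 0)) :
    ¬ ∃ v ω : ℝ,
      2 * x₁ * v * Real.cos x₃ + 2 * x₂ * v * Real.sin x₃ + 2 * b * x₃ * ω
        + W (x₁, x₂, x₃) ≤ 0 := by
  subst hx₃
  simp [Real.cos_zero, Real.sin_zero] at horth
  subst horth
  rintro ⟨v, ω, h⟩
  simp [Real.cos_zero, Real.sin_zero] at h
  have hne : ((0 : ℝ), x₂, (0 : ℝ)) ≠ (0, 0, 0) := by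
    simp; intro h2; exact hxy (by simp [h2])
  have := hWpos _ hne
  linarith
end

section
/- Let β : ℝ → ℝ be a strictly increasing function with β(0) = 0 (extended class K), and let h : ℝⁿ → ℝ be continuous. If an absolutely continuous trajectory x(·) satisfies h(x(0)) ≥ 0 and (d/dt)h(x(t)) ≥ −β(h(x(t))) + ε for almost all t, with ε > 0, then h(x(t)) ≥ 0 for all t ≥ 0; in fact h(x(t)) ≥ min{h(x(0)), β⁻¹(ε)} whenever β⁻¹(ε) exists. -/
open MeasureTheory intervalIntegral

lemma aux_comparison (φ g : ℝ → ℝ) (hφ : Continuous φ)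
    (hgint : ∀ t : ℝ, IntervalIntegrable g volume 0 t)
    (hAC : ∀ t : ℝ, φ t = φ 0 + ∫ s in (0:ℝ)..t, g s)
    (m : ℝ)
    (hineq : ∀ᵐ t : ℝ, 0 ≤ t → φ t < m → 0 ≤ g t)
    (h0 : m ≤ φ 0) : ∀ t, 0 ≤ t → m ≤ φ t := by
  intro t ht
  by_contra hc
  push_neg at hc
  have ht0 : 0 < t := by
    rcases ht.lt_or_eq with h | h
    · exact h
    · rw [← h] at hc; linarith
  set S := Set.Icc 0 t ∩ φ ⁻¹' Set.Ici m with hS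
  have hSne : S.Nonempty := ⟨0, ⟨le_refl 0, ht⟩, h0⟩
  have hSbdd : BddAbove S := ⟨t, fun u hu => hu.1.2⟩
  have hSclosed : IsClosed S := (isClosed_Icc).inter (isClosed_Ici.preimage hφ)
  set s := sSup S with hs
  have hsS : s ∈ S := hSclosed.csSup_mem hSne hSbdd
  have hs0 : 0 ≤ s := hsS.1.1
  have hst : s ≤ t := hsS.1.2
  have hφs : m ≤ φ s := hsS.2
  have hslt : s < t := lt_of_le_of_ne hst (fun h => by rw [h] at hφs; linarith)
  have hbetween : ∀ u, s < u → u ≤ t → φ u < m := by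
    intro u hsu hut
    by_contra hcc
    push_neg at hcc
    have hu : u ∈ S := ⟨⟨hs0.trans hsu.le, hut⟩, hcc⟩
    exact absurd (le_csSup hSbdd hu) (not_le.mpr hsu)
  have hint : ∫ u in s..t, g u = φ t - φ s := by
    rw [hAC t, hAC s, ← intervalIntegral.integral_interval_sub_left (hgint t) (hgint s)]
    ring
  have hnn : 0 ≤ ∫ u in s..t, g u := by
    rw [intervalIntegral.integral_of_le hslt.le]
    apply MeasureTheory.setIntegral_nonneg_of_ae_restrict
    have : ∀ᵐ u ∂(volume.restrict (Set.Ioc s t)), 0 ≤ g u := by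
      rw [ae_restrict_iff' measurableSet_Ioc]
      filter_upwards [hineq] with u hu hu2
      exact hu (hs0.trans hu2.1.le) (hbetween u hu2.1 hu2.2)
    exact this
  linarith

theorem stmt_18 {n : ℕ} (β : ℝ → ℝ) (hβmono : StrictMono β) (hβ0 : β 0 = 0)
    (h : EuclideanSpace ℝ (Fin n) → ℝ) (hh : Continuous h)
    (ε : ℝ) (hε : 0 < ε)
    (x : ℝ → EuclideanSpace ℝ (Fin n)) (hx : Continuous x)
    -- absolute continuity of t ↦ h (x t)
    (g : ℝ → ℝ) (hgint : ∀ t : ℝ, IntervalIntegrable g volume 0 t)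
    (hAC : ∀ t : ℝ, h (x t) = h (x 0) + ∫ s in (0:ℝ)..t, g s)
    (hineq : ∀ᵐ t : ℝ, 0 ≤ t → g t ≥ -β (h (x t)) + ε)
    (h0 : 0 ≤ h (x 0)) :
    (∀ t : ℝ, 0 ≤ t → 0 ≤ h (x t)) ∧
    (∀ y : ℝ, β y = ε → ∀ t : ℝ, 0 ≤ t → min (h (x 0)) y ≤ h (x t)) := by
  have hφ : Continuous (fun t => h (x t)) := hh.comp hx
  constructor
  · refine aux_comparison (fun t => h (x t)) g hφ hgint hAC 0 ?_ h0
    filter_upwards [hineq] with u hu hu0 hlt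
    have : β (h (x u)) < 0 := by rw [← hβ0]; exact hβmono hlt
    have := hu hu0
    linarith
  · intro y hy
    refine aux_comparison (fun t => h (x t)) g hφ hgint hAC _ ?_ (min_le_left _ _)
    filter_upwards [hineq] with u hu hu0 hlt
    have : β (h (x u)) < ε := by rw [← hy]; exact hβmono (lt_of_lt_of_le hlt (min_le_right _ _))
    have := hu hu0
    linarith
end
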